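/- arXiv:1304.5287 — 3 statements merged into one kernel-verified Lean document; each statement's English description precedes it below -/
import Mathlib

section
/- Let n ≥ 1. For every α ∈ 𝒜 and every j with 1 ≤ j ≤ n, the scalar part of ᾱ e_j α is zero: [ᾱ e_j α]₀ = 0. -/
open MeasureTheory

noncomputable section

/-- `ℝ^{n+1}` with coordinates `x₀, …, xₙ`. -/
abbrev RV (n : ℕ) : Type := Fin (n + 1) → ℝ

/-- The real Clifford algebra `𝒜` generated by `e₁, …, eₙ` (with `eᵢ² = -1`),
presented by its coefficients over the basis `{e_A : A ⊆ {1,…,n}}`. -/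
abbrev CA (n : ℕ) : Type := Finset (Fin n) → ℝ

namespace CA

variable {n : ℕ}

/-- The sign occurring in the product `e_A · e_B = msign A B • e_{A Δ B}`. -/
def msign (A B : Finset (Fin n)) : ℝ :=
  (-1 : ℝ) ^ (((A ×ˢ B).filter fun p => p.2 < p.1).card + (A ∩ B).card)

/-- Clifford multiplication, written on coefficients. -/
def cmul (a b : CA n) : CA n := fun C =>
  ∑ A : Finset (Fin n), ∑ B : Finset (Fin n),
    if symmDiff A B = C then msign A B * a A * b B else 0

/-- The conjugation `ā = Σ_A a_A ē_A`, `ē_A = (-1)^{|A|(|A|+1)/2} e_A`. -/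
def conj (a : CA n) : CA n := fun A => (-1 : ℝ) ^ (A.card * (A.card + 1) / 2) * a A

/-- The scalar part `[a]₀`. -/
def scalarPart (a : CA n) : ℝ := a ∅

/-- `|a|₀² = 2ⁿ Σ_A a_A²`. -/
def normSq (a : CA n) : ℝ := 2 ^ n * ∑ A : Finset (Fin n), (a A) ^ 2

/-- `|a|₀`. -/
def norm0 (a : CA n) : ℝ := Real.sqrt (normSq a)

/-- The unit `e₀ = 1`. -/
def one : CA n := fun A => if A = ∅ then 1 else 0

/-- The generator `eᵢ`, `1 ≤ i ≤ n`. -/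
def gen (i : Fin n) : CA n := fun A => if A = {i} then 1 else 0

/-- `e_i` for `i : Fin (n+1)`: `e_0 = 1` and `e_i` a generator for `i ≥ 1`. -/
def eV : Fin (n + 1) → CA n
  | ⟨0, _⟩ => one
  | ⟨k + 1, hk⟩ => gen ⟨k, Nat.succ_lt_succ_iff.mp hk⟩

/-- `ēᵢ`: `ē₀ = 1`, `ēᵢ = -eᵢ` for `i ≥ 1`. -/
def eVbar (i : Fin (n + 1)) : CA n := conj (eV i)

end CA

/-- The partial derivative `∂F/∂xᵢ` of an `𝒜`-valued function, componentwise. -/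
def pd {n : ℕ} (F : RV n → CA n) (i : Fin (n + 1)) (x : RV n) : CA n :=
  fun A => fderiv ℝ (fun y => F y A) x (Pi.single i 1)

/-- The Dirac operator acting from the left: `D̄F = Σᵢ eᵢ ∂F/∂xᵢ`. -/
def DiracL {n : ℕ} (F : RV n → CA n) (x : RV n) : CA n :=
  ∑ i : Fin (n + 1), CA.cmul (CA.eV i) (pd F i x)

/-- The Dirac operator acting from the right: `FD̄ = Σᵢ (∂F/∂xᵢ) eᵢ`. -/
def DiracR {n : ℕ} (F : RV n → CA n) (x : RV n) : CA n :=
  ∑ i : Fin (n + 1), CA.cmul (pd F i x) (CA.eV i)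

/-- The conjugate operator acting from the left: `DF = Σᵢ ēᵢ ∂F/∂xᵢ`. -/
def DconjL {n : ℕ} (F : RV n → CA n) (x : RV n) : CA n :=
  ∑ i : Fin (n + 1), CA.cmul (CA.eVbar i) (pd F i x)

/-- The conjugate operator acting from the right: `FD = Σᵢ (∂F/∂xᵢ) ēᵢ`. -/
def DconjR {n : ℕ} (F : RV n → CA n) (x : RV n) : CA n :=
  ∑ i : Fin (n + 1), CA.cmul (pd F i x) (CA.eVbar i)

/-- Partial derivative of a real-valued function. -/
def pdR {n : ℕ} (φ : RV n → ℝ) (i : Fin (n + 1)) (x : RV n) : ℝ :=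
  fderiv ℝ φ x (Pi.single i 1)

/-- Second partial derivative `∂²φ/∂xᵢ∂xⱼ`. -/
def pdR2 {n : ℕ} (φ : RV n → ℝ) (i j : Fin (n + 1)) (x : RV n) : ℝ :=
  fderiv ℝ (fun y => fderiv ℝ φ y (Pi.single j 1)) x (Pi.single i 1)

/-- The Laplacian `Δφ = Σᵢ ∂²φ/∂xᵢ²`. -/
def lap {n : ℕ} (φ : RV n → ℝ) (x : RV n) : ℝ := ∑ i : Fin (n + 1), pdR2 φ i i x

/-- `Dφ = ∂φ/∂x₀ - Σ_{i≥1} eᵢ ∂φ/∂xᵢ` as a Clifford-algebra-valued function. -/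
def Dgrad {n : ℕ} (φ : RV n → ℝ) (x : RV n) : CA n :=
  ∑ i : Fin (n + 1), pdR φ i x • CA.eVbar i

/-- The dual operator `D̄*_φ α = α (Dφ) - Dα`. -/
def dualOp {n : ℕ} (φ : RV n → ℝ) (α : RV n → CA n) (x : RV n) : CA n :=
  CA.cmul (α x) (Dgrad φ x) - DconjL α x

/-- `α ∈ C_c^∞(Ω, 𝒜)`. -/
def IsTest {n : ℕ} (Ω : Set (RV n)) (α : RV n → CA n) : Prop :=
  ContDiff ℝ (⊤ : ℕ∞) α ∧ HasCompactSupport α ∧ tsupport α ⊆ Ω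

/-- `f ∈ L²(Ω, 𝒜, φ)`: measurable with `∫_Ω |f|₀² e^{-φ} dx < ∞`. -/
def MemL2w {n : ℕ} (Ω : Set (RV n)) (φ : RV n → ℝ) (f : RV n → CA n) : Prop :=
  AEStronglyMeasurable f (volume.restrict Ω) ∧
  Integrable (fun x => CA.normSq (f x) * Real.exp (-φ x)) (volume.restrict Ω)

/-- `u` is a weak solution of `D̄u = f` on `Ω`:
`∫_Ω α f dx = -∫_Ω (α D̄) u dx` for all `α ∈ C_c^∞(Ω, 𝒜)`. -/
def IsWeakSol {n : ℕ} (Ω : Set (RV n)) (u f : RV n → CA n) : Prop :=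
  ∀ α : RV n → CA n, IsTest Ω α →
    ∫ x in Ω, CA.cmul (α x) (f x) = -∫ x in Ω, CA.cmul (DiracR α x) (u x)

/-- The `𝒜`-valued inner product `(f,g)_φ = ∫_Ω f̄ g e^{-φ} dx`. -/
def innerW {n : ℕ} (Ω : Set (RV n)) (φ : RV n → ℝ) (f g : RV n → CA n) : CA n :=
  ∫ x in Ω, Real.exp (-φ x) • CA.cmul (CA.conj (f x)) (g x)



namespace CA
variable {n : ℕ}

lemma cmul_gen (a : CA n) (j : Fin n) (C : Finset (Fin n)) :
    cmul a (gen j) C = msign (symmDiff C {j}) {j} * a (symmDiff C {j}) := by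
  unfold cmul gen
  have hstep : ∀ A B : Finset (Fin n),
      (if symmDiff A B = C then msign A B * a A * (if B = ({j} : Finset (Fin n)) then (1:ℝ) else 0) else 0)
      = if B = ({j} : Finset (Fin n)) then (if A = symmDiff C {j} then msign A {j} * a A else 0) else 0 := by
    intro A B
    by_cases hB : B = ({j} : Finset (Fin n))
    · subst hB
      by_cases hA : A = symmDiff C {j}
      · subst hA
        simp [symmDiff_symmDiff_cancel_right]
      · have hne : ¬ symmDiff A {j} = C := by
          intro h
          exact hA (by rw [← h, symmDiff_symmDiff_cancel_right])
        simp [hne, hA]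
    · simp [hB]
  simp_rw [hstep]
  simp [Finset.sum_ite_eq' Finset.univ]

lemma scalarPart_cmul (a b : CA n) :
    scalarPart (cmul a b) = ∑ A : Finset (Fin n), msign A A * a A * b A := by
  unfold scalarPart cmul
  have hstep : ∀ A B : Finset (Fin n),
      (if symmDiff A B = (∅ : Finset (Fin n)) then msign A B * a A * b B else 0)
      = if B = A then msign A A * a A * b A else 0 := by
    intro A B
    have : symmDiff A B = (∅ : Finset (Fin n)) ↔ A = B := symmDiff_eq_bot
    by_cases hB : B = A
    · subst hB; simp [this]
    · have : ¬ symmDiff A B = (∅ : Finset (Fin n)) := fun h => hB (this.mp h).symm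
      simp [this, hB]
  simp_rw [hstep]
  simp [Finset.sum_ite_eq' Finset.univ]

lemma q_insert (A : Finset (Fin n)) (j : Fin n) (hj : j ∉ A) :
    (((insert j A) ×ˢ (insert j A)).filter fun p => p.2 < p.1).card
      = ((A ×ˢ A).filter fun p => p.2 < p.1).card + A.card := by
  rw [Finset.card_filter, Finset.card_filter, Finset.sum_product, Finset.sum_product,
    Finset.sum_insert hj]
  simp_rw [Finset.sum_insert hj]
  rw [Finset.sum_add_distrib]
  have h1 : (if j < j then (1:ℕ) else 0) = 0 := by simp
  have h2 : ((∑ y ∈ A, if y < j then (1:ℕ) else 0) + ∑ x ∈ A, if j < x then (1:ℕ) else 0)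
      = A.card := by
    rw [← Finset.sum_add_distrib, Finset.card_eq_sum_ones]
    apply Finset.sum_congr rfl
    intro x hx
    have hxj : x ≠ j := fun h => hj (h ▸ hx)
    rcases hxj.lt_or_gt with h | h
    · simp [h, asymm h]
    · simp [h, asymm h]
  omega

lemma msign_self (A : Finset (Fin n)) :
    msign A A = (-1:ℝ) ^ (((A ×ˢ A).filter fun p => p.2 < p.1).card + A.card) := by
  unfold msign; rw [Finset.inter_self]

lemma card_filter_prod_singleton (A : Finset (Fin n)) (j : Fin n) :
    ((A ×ˢ ({j} : Finset (Fin n))).filter fun p => p.2 < p.1).card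
      = (A.filter fun x => j < x).card := by
  rw [Finset.card_filter, Finset.card_filter, Finset.sum_product]
  simp only [Finset.sum_singleton]

lemma msign_singleton_not_mem {A : Finset (Fin n)} {j : Fin n} (hj : j ∉ A) :
    msign A {j} = (-1:ℝ) ^ ((A.filter fun x => j < x).card) := by
  unfold msign
  rw [card_filter_prod_singleton]
  have h : A ∩ ({j} : Finset (Fin n)) = ∅ := by
    ext x; simp; rintro hx rfl; exact hj hx
  simp [h]

lemma msign_insert_singleton {A : Finset (Fin n)} {j : Fin n} (hj : j ∉ A) :
    msign (insert j A) {j} = (-1:ℝ) ^ ((A.filter fun x => j < x).card + 1) := by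
  unfold msign
  rw [card_filter_prod_singleton]
  have h1 : (insert j A).filter (fun x => j < x) = A.filter (fun x => j < x) := by
    simp [Finset.filter_insert]
  have h2 : insert j A ∩ ({j} : Finset (Fin n)) = {j} := by
    ext x
    simp only [Finset.mem_inter, Finset.mem_insert, Finset.mem_singleton]
    tauto
  rw [h1, h2]
  simp

lemma symmDiff_singleton_not_mem {A : Finset (Fin n)} {j : Fin n} (hj : j ∉ A) :
    symmDiff A {j} = insert j A := by
  ext x
  simp only [Finset.mem_symmDiff, Finset.mem_singleton, Finset.mem_insert]
  constructor
  · rintro (⟨h1, _⟩ | ⟨rfl, _⟩)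
    · exact Or.inr h1
    · exact Or.inl rfl
  · rintro (rfl | h)
    · exact Or.inr ⟨rfl, hj⟩
    · exact Or.inl ⟨h, fun e => hj (e ▸ h)⟩

lemma sign_helper (q m a t : ℕ) (u v : ℝ) :
    (-1:ℝ)^(q+m) * ((-1:ℝ)^(a+1) * ((-1:ℝ)^(t+(m+1)) * u)) * v
      + (-1:ℝ)^(q+m+(m+1)) * ((-1:ℝ)^a * ((-1:ℝ)^t * v)) * u = 0 := by
  simp only [pow_add, pow_one]
  ring

lemma triangle_succ (m : ℕ) : (m+1)*(m+1+1)/2 = m*(m+1)/2 + (m+1) := by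
  have h : (m+1)*(m+1+1) = m*(m+1) + 2*(m+1) := by ring
  omega

lemma key (α : CA n) (j : Fin n) (A : Finset (Fin n)) (hj : j ∉ A) :
    msign A A * (msign (insert j A) {j} * conj α (insert j A)) * α A
      + msign (insert j A) (insert j A) * (msign A {j} * conj α A) * α (insert j A) = 0 := by
  simp only [conj]
  rw [msign_self, msign_self, msign_singleton_not_mem hj, msign_insert_singleton hj,
    q_insert A j hj, Finset.card_insert_of_notMem hj, triangle_succ]
  exact sign_helper _ _ _ _ _ _

end CA

theorem scalarPart_conj_gen_mul {n : ℕ} (hn : 1 ≤ n) (α : CA n) (j : Fin n) :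
    CA.scalarPart (CA.cmul (CA.cmul (CA.conj α) (CA.gen j)) α) = 0 := by
  rw [CA.scalarPart_cmul]
  simp_rw [CA.cmul_gen]
  apply Finset.sum_ninvolution (fun A => symmDiff A {j})
  · intro A
    by_cases hjA : j ∈ A
    · have h1 : symmDiff (A.erase j) {j} = A := by
        rw [CA.symmDiff_singleton_not_mem (Finset.notMem_erase j A), Finset.insert_erase hjA]
      have h2 : symmDiff A {j} = A.erase j := by
        nth_rewrite 1 [← h1]
        exact symmDiff_symmDiff_cancel_right _ _
      rw [h2, h1, add_comm]
      have hk := CA.key α j (A.erase j) (Finset.notMem_erase j A)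
      rwa [Finset.insert_erase hjA] at hk
    · have h1 : symmDiff A {j} = insert j A := CA.symmDiff_singleton_not_mem hjA
      have h2 : symmDiff (insert j A) {j} = A := by
        rw [← h1, symmDiff_symmDiff_cancel_right]
      rw [h1, h2]
      exact CA.key α j A hjA
  · intro A _ h
    have hj := Finset.ext_iff.mp h j
    simp [Finset.mem_symmDiff] at hj
  · intro A
    exact Finset.mem_univ _
  · intro A
    exact symmDiff_symmDiff_cancel_right _ _

end
end

section
/- Let n ≥ 1. For every α ∈ 𝒜 and every j with 1 ≤ j ≤ n, the scalar part of ᾱ α e_j is zero: [ᾱ α e_j]₀ = 0; equivalently, the e_j-component of ᾱα vanishes. -/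
open MeasureTheory

noncomputable section

open Finset in
lemma card_cross {n : ℕ} (A B : Finset (Fin n)) :
    ((A ×ˢ B).filter fun p => p.2 < p.1).card +
    ((B ×ˢ A).filter fun p => p.2 < p.1).card + (A ∩ B).card = A.card * B.card := by
  have h1 : ((B ×ˢ A).filter fun p => p.2 < p.1) =
      ((A ×ˢ B).filter fun p => p.1 < p.2).image Prod.swap := by
    ext ⟨x, y⟩
    simp only [mem_filter, mem_product, Finset.mem_image]
    constructor
    · rintro ⟨⟨hx, hy⟩, hlt⟩; exact ⟨(y, x), ⟨⟨hy, hx⟩, hlt⟩, rfl⟩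
    · rintro ⟨⟨a, b⟩, ⟨⟨ha, hb⟩, hlt⟩, h⟩
      cases h; exact ⟨⟨hb, ha⟩, hlt⟩
  have h2 : ((A ×ˢ B).filter fun p => p.1 = p.2) = (A ∩ B).image fun x => (x, x) := by
    ext ⟨x, y⟩
    simp only [mem_filter, mem_product, Finset.mem_image, Finset.mem_inter]
    constructor
    · rintro ⟨⟨hx, hy⟩, rfl⟩; exact ⟨x, ⟨hx, hy⟩, rfl⟩
    · rintro ⟨a, ⟨ha, hb⟩, h⟩; cases h; exact ⟨⟨ha, hb⟩, rfl⟩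
  have hc1 : ((B ×ˢ A).filter fun p => p.2 < p.1).card =
      ((A ×ˢ B).filter fun p => p.1 < p.2).card := by
    rw [h1, Finset.card_image_of_injective _ Prod.swap_injective]
  have hc2 : ((A ×ˢ B).filter fun p => p.1 = p.2).card = (A ∩ B).card := by
    rw [h2, Finset.card_image_of_injective]
    intro a b hab; exact (Prod.mk.injEq _ _ _ _).mp hab |>.1
  have key1 : ((A ×ˢ B).filter fun p => p.2 < p.1).card +
      ((A ×ˢ B).filter fun p => ¬ p.2 < p.1).card = (A ×ˢ B).card :=
    Finset.card_filter_add_card_filter_not _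
  have key2 : ((A ×ˢ B).filter fun p => ¬ p.2 < p.1) =
      ((A ×ˢ B).filter fun p => p.1 < p.2) ∪ ((A ×ˢ B).filter fun p => p.1 = p.2) := by
    rw [← Finset.filter_or]
    apply Finset.filter_congr
    intro x _
    simp only [not_lt, le_iff_lt_or_eq]
  have hdisj : Disjoint ((A ×ˢ B).filter fun p => p.1 < p.2)
      ((A ×ˢ B).filter fun p => p.1 = p.2) := by
    rw [Finset.disjoint_filter]
    intro x _ h h'
    exact absurd h' (ne_of_lt h)
  rw [key2, Finset.card_union_of_disjoint hdisj, Finset.card_product] at key1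
  omega

lemma neg_one_pow_eq_neg {x y : ℕ} (h : Odd (x + y)) : (-1 : ℝ) ^ x = -(-1 : ℝ) ^ y := by
  rcases Nat.even_or_odd x with hx | hx <;> rcases Nat.even_or_odd y with hy | hy
  · exact absurd (hx.add hy) (Nat.not_even_iff_odd.mpr h)
  · rw [hx.neg_one_pow, hy.neg_one_pow]; try norm_num
  · rw [hx.neg_one_pow, hy.neg_one_pow]; try norm_num
  · exact absurd (hx.add_odd hy) (Nat.not_even_iff_odd.mpr h)

lemma sign_key {n : ℕ} {A B : Finset (Fin n)} {j : Fin n} (h : symmDiff A B = {j}) :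
    CA.msign A B * (-1 : ℝ) ^ (A.card * (A.card + 1) / 2) =
      -(CA.msign B A * (-1 : ℝ) ^ (B.card * (B.card + 1) / 2)) := by
  set m := (A ∩ B).card with hm
  have hAB : (A ∩ B).card + (A \ B).card = A.card := Finset.card_inter_add_card_sdiff A B
  have hBA : (B ∩ A).card + (B \ A).card = B.card := Finset.card_inter_add_card_sdiff B A
  have hint : (B ∩ A).card = m := by rw [Finset.inter_comm]
  have hone : (A \ B).card + (B \ A).card = 1 := by
    have hd : Disjoint (A \ B) (B \ A) := disjoint_sdiff_sdiff
    have hcu := Finset.card_union_of_disjoint hd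
    rw [← hcu]
    have : A \ B ∪ B \ A = symmDiff A B := by rw [symmDiff_def]; rfl
    rw [this, h, Finset.card_singleton]
  have hcross := card_cross A B
  set c1 := ((A ×ˢ B).filter fun p : Fin n × Fin n => p.2 < p.1).card with hc1
  set c2 := ((B ×ˢ A).filter fun p : Fin n × Fin n => p.2 < p.1).card with hc2
  obtain ⟨k, hk⟩ := Nat.even_mul_succ_self m
  have hmm : (m + 1) * (m + 1 + 1) = m * (m + 1) + 2 * (m + 1) := by ring
  have hmm2 : (m + 1) * m = m * (m + 1) := by ring
  have ha : A.card = m ∨ A.card = m + 1 := by omega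
  have hb : B.card = m ∨ B.card = m + 1 := by omega
  have hodd : Odd (c1 + m + A.card * (A.card + 1) / 2 +
      (c2 + m + B.card * (B.card + 1) / 2)) := by
    rcases ha with h' | h' <;> rcases hb with h'' | h'' <;> rw [h', h''] at hcross ⊢ <;>
      exact ⟨2 * k + m, by omega⟩
  rw [CA.msign, CA.msign, ← hc1, ← hc2, ← hm, hint, ← pow_add, ← pow_add]
  exact neg_one_pow_eq_neg hodd

lemma msign_self_singleton {n : ℕ} (j : Fin n) : CA.msign ({j} : Finset (Fin n)) {j} = -1 := by
  rw [CA.msign]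
  rw [Finset.singleton_product_singleton]
  simp [Finset.filter_singleton]

lemma scalar_gen {n : ℕ} (x : CA n) (j : Fin n) :
    CA.scalarPart (CA.cmul x (CA.gen j)) = -x {j} := by
  rw [CA.scalarPart, CA.cmul]
  have key : ∀ A B : Finset (Fin n),
      (if symmDiff A B = ∅ then CA.msign A B * x A * CA.gen j B else 0) =
      if A = {j} then (if B = {j} then -x {j} else 0) else 0 := by
    intro A B
    by_cases hB : B = {j} <;> by_cases hA : A = {j}
    · subst hA; subst hB
      have hc : symmDiff ({j} : Finset (Fin n)) {j} = ∅ := by simp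
      rw [if_pos hc, if_pos rfl, if_pos rfl, CA.gen, if_pos rfl, msign_self_singleton]; ring
    · subst hB
      have hc : ¬ symmDiff A ({j} : Finset (Fin n)) = ∅ := by
        rw [← Finset.bot_eq_empty, symmDiff_eq_bot]; exact hA
      rw [if_neg hc, if_neg hA]
    · subst hA
      simp [CA.gen, hB]
    · simp [CA.gen, hB]
  simp only [key]
  simp

lemma mid_zero {n : ℕ} (α : CA n) (j : Fin n) :
    CA.cmul (CA.conj α) α {j} = 0 := by
  rw [CA.cmul]
  set f : Finset (Fin n) → Finset (Fin n) → ℝ := fun A B =>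
    if symmDiff A B = {j} then CA.msign A B * CA.conj α A * α B else 0 with hf
  have hanti : ∀ A B, f A B = -f B A := by
    intro A B
    rw [hf]
    simp only
    by_cases h : symmDiff A B = {j}
    · have h' : symmDiff B A = {j} := by rwa [symmDiff_comm]
      rw [if_pos h, if_pos h', CA.conj, CA.conj]
      linear_combination α A * α B * sign_key h
    · have h' : ¬ symmDiff B A = {j} := by rwa [symmDiff_comm]
      rw [if_neg h, if_neg h', neg_zero]
  have hsum : ∑ A : Finset (Fin n), ∑ B : Finset (Fin n), f A B =
      -∑ A : Finset (Fin n), ∑ B : Finset (Fin n), f A B := by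
    conv_lhs => rw [Finset.sum_comm]
    rw [← Finset.sum_neg_distrib]
    apply Finset.sum_congr rfl
    intro A _
    rw [← Finset.sum_neg_distrib]
    apply Finset.sum_congr rfl
    intro B _
    rw [hanti A B, neg_neg]
  have : ∑ A : Finset (Fin n), ∑ B : Finset (Fin n), f A B = 0 := by linarith
  exact this


theorem scalarPart_conj_mul_gen {n : ℕ} (hn : 1 ≤ n) (α : CA n) (j : Fin n) :
    CA.scalarPart (CA.cmul (CA.cmul (CA.conj α) α) (CA.gen j)) = 0 := by
  rw [scalar_gen, mid_zero, neg_zero]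

end
end

section
/- Let n = 1, let Ω ⊆ ℝ² be open and let φ ∈ C²(Ω,ℝ). Then for every α ∈ C_c^∞(Ω,𝒜), ‖D̄*_φ α‖² = ‖D̄α‖² + ∫_Ω |α|₀² Δφ e^{−φ} dx, where Δφ = ∂²φ/∂x₀² + ∂²φ/∂x₁², ‖D̄*_φ α‖² = ∫_Ω |D̄*_φ α|₀² e^{−φ} dx and ‖D̄α‖² = ∫_Ω |D̄α|₀² e^{−φ} dx. -/
open MeasureTheory

noncomputable section

lemma univ_fin1 : (Finset.univ : Finset (Finset (Fin 1))) = {∅, {0}} := by decide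

lemma sum_CA1 {M : Type*} [AddCommMonoid M] (f : Finset (Fin 1) → M) :
    ∑ A : Finset (Fin 1), f A = f ∅ + f {0} := by
  rw [univ_fin1, Finset.sum_insert (by decide), Finset.sum_singleton]

lemma msign_ee : CA.msign (∅ : Finset (Fin 1)) ∅ = 1 := by
  rw [CA.msign, (by decide : (((∅ : Finset (Fin 1)) ×ˢ (∅ : Finset (Fin 1))).filter fun p => p.2 < p.1).card + ((∅ : Finset (Fin 1)) ∩ ∅).card = 0)]; norm_num
lemma msign_es : CA.msign (∅ : Finset (Fin 1)) {0} = 1 := by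
  rw [CA.msign, (by decide : (((∅ : Finset (Fin 1)) ×ˢ ({0} : Finset (Fin 1))).filter fun p => p.2 < p.1).card + ((∅ : Finset (Fin 1)) ∩ {0}).card = 0)]; norm_num
lemma msign_se : CA.msign ({0} : Finset (Fin 1)) ∅ = 1 := by
  rw [CA.msign, (by decide : ((({0} : Finset (Fin 1)) ×ˢ (∅ : Finset (Fin 1))).filter fun p => p.2 < p.1).card + (({0} : Finset (Fin 1)) ∩ ∅).card = 0)]; norm_num
lemma msign_ss : CA.msign ({0} : Finset (Fin 1)) {0} = -1 := by
  rw [CA.msign, (by decide : ((({0} : Finset (Fin 1)) ×ˢ ({0} : Finset (Fin 1))).filter fun p => p.2 < p.1).card + (({0} : Finset (Fin 1)) ∩ {0}).card = 1)]; norm_num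

lemma cmul_empty (a b : CA 1) :
    CA.cmul a b ∅ = a ∅ * b ∅ - a {0} * b {0} := by
  simp only [CA.cmul, sum_CA1, (by decide : symmDiff (∅ : Finset (Fin 1)) ∅ = ∅),
    (by decide : symmDiff (∅ : Finset (Fin 1)) {0} = {0}),
    (by decide : symmDiff ({0} : Finset (Fin 1)) ∅ = {0}),
    (by decide : symmDiff ({0} : Finset (Fin 1)) {0} = ∅),
    msign_ee, msign_es, msign_se, msign_ss]
  simp [(by decide : ({0} : Finset (Fin 1)) ≠ ∅)]
  ring

lemma cmul_single (a b : CA 1) :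
    CA.cmul a b {0} = a ∅ * b {0} + a {0} * b ∅ := by
  simp only [CA.cmul, sum_CA1, (by decide : symmDiff (∅ : Finset (Fin 1)) ∅ = ∅),
    (by decide : symmDiff (∅ : Finset (Fin 1)) {0} = {0}),
    (by decide : symmDiff ({0} : Finset (Fin 1)) ∅ = {0}),
    (by decide : symmDiff ({0} : Finset (Fin 1)) {0} = ∅),
    msign_ee, msign_es, msign_se, msign_ss]
  simp [(by decide : (∅ : Finset (Fin 1)) ≠ {0})]

lemma normSq1 (a : CA 1) : CA.normSq a = 2 * (a ∅ ^ 2 + a {0} ^ 2) := by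
  rw [CA.normSq, sum_CA1]; norm_num

lemma eV0 : CA.eV (0 : Fin 2) = CA.one := rfl
lemma eV1 : CA.eV (1 : Fin 2) = CA.gen 0 := rfl

lemma eVbar0_empty : CA.eVbar (0 : Fin 2) ∅ = 1 := by
  simp [CA.eVbar, eV0, CA.conj, CA.one]
lemma eVbar0_single : CA.eVbar (0 : Fin 2) {0} = 0 := by
  simp [CA.eVbar, eV0, CA.conj, CA.one, (by decide : ({0} : Finset (Fin 1)) ≠ ∅)]
lemma eVbar1_empty : CA.eVbar (1 : Fin 2) ∅ = 0 := by
  simp [CA.eVbar, eV1, CA.conj, CA.gen, (by decide : (∅ : Finset (Fin 1)) ≠ {0})]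
lemma eVbar1_single : CA.eVbar (1 : Fin 2) {0} = -1 := by
  rw [CA.eVbar, eV1, CA.conj, (by decide : ({0} : Finset (Fin 1)).card = 1)]
  norm_num [CA.gen]

lemma eV0_empty : CA.eV (0 : Fin 2) ∅ = 1 := by simp [eV0, CA.one]
lemma eV0_single : CA.eV (0 : Fin 2) {0} = 0 := by
  simp [eV0, CA.one, (by decide : ({0} : Finset (Fin 1)) ≠ ∅)]
lemma eV1_empty : CA.eV (1 : Fin 2) ∅ = 0 := by
  simp [eV1, CA.gen, (by decide : (∅ : Finset (Fin 1)) ≠ {0})]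
lemma eV1_single : CA.eV (1 : Fin 2) {0} = 1 := by simp [eV1, CA.gen]

lemma DiracL_empty (α : RV 1 → CA 1) (x : RV 1) :
    DiracL α x ∅ = pd α 0 x ∅ - pd α 1 x {0} := by
  simp only [DiracL]
  rw [Finset.sum_apply, Fin.sum_univ_two]
  show CA.cmul _ _ ∅ + CA.cmul _ _ ∅ = _
  rw [cmul_empty, cmul_empty, eV0_empty, eV0_single, eV1_empty, eV1_single]
  ring

lemma DiracL_single (α : RV 1 → CA 1) (x : RV 1) :
    DiracL α x {0} = pd α 0 x {0} + pd α 1 x ∅ := by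
  simp only [DiracL]
  rw [Finset.sum_apply, Fin.sum_univ_two]
  show CA.cmul _ _ {0} + CA.cmul _ _ {0} = _
  rw [cmul_single, cmul_single, eV0_empty, eV0_single, eV1_empty, eV1_single]
  ring

lemma DconjL_empty (α : RV 1 → CA 1) (x : RV 1) :
    DconjL α x ∅ = pd α 0 x ∅ + pd α 1 x {0} := by
  simp only [DconjL]
  rw [Finset.sum_apply, Fin.sum_univ_two]
  show CA.cmul _ _ ∅ + CA.cmul _ _ ∅ = _
  rw [cmul_empty, cmul_empty, eVbar0_empty, eVbar0_single, eVbar1_empty, eVbar1_single]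
  ring

lemma DconjL_single (α : RV 1 → CA 1) (x : RV 1) :
    DconjL α x {0} = pd α 0 x {0} - pd α 1 x ∅ := by
  simp only [DconjL]
  rw [Finset.sum_apply, Fin.sum_univ_two]
  show CA.cmul _ _ {0} + CA.cmul _ _ {0} = _
  rw [cmul_single, cmul_single, eVbar0_empty, eVbar0_single, eVbar1_empty, eVbar1_single]
  ring

lemma Dgrad_empty (φ : RV 1 → ℝ) (x : RV 1) :
    Dgrad φ x ∅ = pdR φ 0 x := by
  simp only [Dgrad]
  rw [Finset.sum_apply, Fin.sum_univ_two]
  show pdR φ 0 x * CA.eVbar 0 ∅ + pdR φ 1 x * CA.eVbar 1 ∅ = _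
  rw [eVbar0_empty, eVbar1_empty]; ring

lemma Dgrad_single (φ : RV 1 → ℝ) (x : RV 1) :
    Dgrad φ x {0} = -pdR φ 1 x := by
  simp only [Dgrad]
  rw [Finset.sum_apply, Fin.sum_univ_two]
  show pdR φ 0 x * CA.eVbar 0 {0} + pdR φ 1 x * CA.eVbar 1 {0} = _
  rw [eVbar0_single, eVbar1_single]; ring

lemma dualOp_empty (φ : RV 1 → ℝ) (α : RV 1 → CA 1) (x : RV 1) :
    dualOp φ α x ∅ = α x ∅ * pdR φ 0 x + α x {0} * pdR φ 1 x
      - pd α 0 x ∅ - pd α 1 x {0} := by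
  show CA.cmul (α x) (Dgrad φ x) ∅ - DconjL α x ∅ = _
  rw [cmul_empty, Dgrad_empty, Dgrad_single, DconjL_empty]; ring

lemma dualOp_single (φ : RV 1 → ℝ) (α : RV 1 → CA 1) (x : RV 1) :
    dualOp φ α x {0} = α x {0} * pdR φ 0 x - α x ∅ * pdR φ 1 x
      - pd α 0 x {0} + pd α 1 x ∅ := by
  show CA.cmul (α x) (Dgrad φ x) {0} - DconjL α x {0} = _
  rw [cmul_single, Dgrad_empty, Dgrad_single, DconjL_single]; ring

lemma lap_eq (φ : RV 1 → ℝ) (x : RV 1) :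
    lap φ x = pdR2 φ 0 0 x + pdR2 φ 1 1 x := by
  simp [lap, Fin.sum_univ_two]

-- glue continuity
lemma continuous_of_glue {f : RV 1 → ℝ} {Ω K : Set (RV 1)} (hΩ : IsOpen Ω) (hKc : IsClosed K)
    (hKΩ : K ⊆ Ω) (hf : ∀ x ∈ Ω, ContinuousAt f x) (h0 : ∀ x ∉ K, f x = 0) :
    Continuous f := by
  rw [continuous_iff_continuousAt]
  intro x
  by_cases hx : x ∈ Ω
  · exact hf x hx
  · have hxK : x ∉ K := fun h => hx (hKΩ h)
    have hev : f =ᶠ[nhds x] (fun _ => 0) := by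
      filter_upwards [hKc.isOpen_compl.mem_nhds hxK] with y hy using h0 y hy
    exact continuousAt_const.congr hev.symm

lemma hcs_of_vanish {f : RV 1 → ℝ} {K : Set (RV 1)} (hK : IsCompact K)
    (h0 : ∀ x ∉ K, f x = 0) : HasCompactSupport f := by
  apply hK.of_isClosed_subset isClosed_closure
  apply closure_minimal _ hK.isClosed
  intro x hx
  by_contra hxK
  exact hx (h0 x hxK)

set_option maxHeartbeats 1000000 in
theorem key (Ω : Set (RV 1)) (hΩ : IsOpen Ω)
    (p u v : RV 1 → ℝ) (hp : ContDiffOn ℝ 2 p Ω)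
    (hu : ContDiff ℝ (⊤ : ℕ∞) u) (hv : ContDiff ℝ (⊤ : ℕ∞) v)
    (hcu : HasCompactSupport u) (hcv : HasCompactSupport v)
    (hsu : tsupport u ⊆ Ω) (hsv : tsupport v ⊆ Ω) :
    ∫ x in Ω, (2*((u x * pdR p 0 x + v x * pdR p 1 x - pdR u 0 x - pdR v 1 x)^2
        + (v x * pdR p 0 x - u x * pdR p 1 x - pdR v 0 x + pdR u 1 x)^2)) * Real.exp (-p x)
    = (∫ x in Ω, (2*((pdR u 0 x - pdR v 1 x)^2 + (pdR v 0 x + pdR u 1 x)^2)) * Real.exp (-p x))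
      + ∫ x in Ω, (2*(u x^2 + v x^2)) * ((pdR2 p 0 0 x + pdR2 p 1 1 x)) * Real.exp (-p x) := by
  classical
  set K : Set (RV 1) := tsupport u ∪ tsupport v with hKdef
  have hK : IsCompact K := hcu.union hcv
  have hKΩ : K ⊆ Ω := Set.union_subset hsu hsv
  have hKc : IsClosed K := (isClosed_tsupport u).union (isClosed_tsupport v)
  have h0u : ∀ x ∉ K, u x = 0 := fun x hx =>
    image_eq_zero_of_notMem_tsupport (fun h => hx (Or.inl h))
  have h0v : ∀ x ∉ K, v x = 0 := fun x hx =>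
    image_eq_zero_of_notMem_tsupport (fun h => hx (Or.inr h))
  have h0du : ∀ x ∉ K, ∀ i, pdR u i x = 0 := by
    intro x hx i
    rw [pdR, fderiv_of_notMem_tsupport ℝ (fun h => hx (Or.inl h))]
    simp
  have h0dv : ∀ x ∉ K, ∀ i, pdR v i x = 0 := by
    intro x hx i
    rw [pdR, fderiv_of_notMem_tsupport ℝ (fun h => hx (Or.inr h))]
    simp
  have hud : Differentiable ℝ u := hu.differentiable (by simp)
  have hvd : Differentiable ℝ v := hv.differentiable (by simp)
  have hu' : ContDiff ℝ (⊤ : ℕ∞) (fderiv ℝ u) := hu.fderiv_right (by simp)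
  have hv' : ContDiff ℝ (⊤ : ℕ∞) (fderiv ℝ v) := hv.fderiv_right (by simp)
  have hu'd : Differentiable ℝ (fderiv ℝ u) := hu'.differentiable (by simp)
  have hv'd : Differentiable ℝ (fderiv ℝ v) := hv'.differentiable (by simp)
  have hpdu : ∀ (i : Fin 2) (x : RV 1), HasFDerivAt (pdR u i)
      ((ContinuousLinearMap.apply ℝ ℝ (Pi.single i 1 : RV 1)).comp
        (fderiv ℝ (fderiv ℝ u) x)) x := fun i x =>
    ((ContinuousLinearMap.apply ℝ ℝ (Pi.single i 1 : RV 1)).hasFDerivAt).comp x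
      ((hu'd x).hasFDerivAt)
  have hpdv : ∀ (i : Fin 2) (x : RV 1), HasFDerivAt (pdR v i)
      ((ContinuousLinearMap.apply ℝ ℝ (Pi.single i 1 : RV 1)).comp
        (fderiv ℝ (fderiv ℝ v) x)) x := fun i x =>
    ((ContinuousLinearMap.apply ℝ ℝ (Pi.single i 1 : RV 1)).hasFDerivAt).comp x
      ((hv'd x).hasFDerivAt)
  have hpduc : ∀ i : Fin 2, Continuous (pdR u i) := fun i =>
    (ContinuousLinearMap.apply ℝ ℝ (Pi.single i 1 : RV 1)).continuous.comp hu'.continuous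
  have hpdvc : ∀ i : Fin 2, Continuous (pdR v i) := fun i =>
    (ContinuousLinearMap.apply ℝ ℝ (Pi.single i 1 : RV 1)).continuous.comp hv'.continuous
  have hsymm_u : ∀ x : RV 1, fderiv ℝ (fderiv ℝ u) x (Pi.single 0 1) (Pi.single 1 1)
      = fderiv ℝ (fderiv ℝ u) x (Pi.single 1 1) (Pi.single 0 1) := fun x =>
    second_derivative_symmetric (fun y => (hud y).hasFDerivAt) ((hu'd x).hasFDerivAt) _ _
  have hsymm_v : ∀ x : RV 1, fderiv ℝ (fderiv ℝ v) x (Pi.single 0 1) (Pi.single 1 1)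
      = fderiv ℝ (fderiv ℝ v) x (Pi.single 1 1) (Pi.single 0 1) := fun x =>
    second_derivative_symmetric (fun y => (hvd y).hasFDerivAt) ((hv'd x).hasFDerivAt) _ _
  have hp' : ContDiffOn ℝ 1 (fderiv ℝ p) Ω := hp.fderiv_of_isOpen hΩ (by norm_num)
  have hpdiff : ∀ x ∈ Ω, DifferentiableAt ℝ p x := fun x hx =>
    (hp.differentiableOn (by norm_num)).differentiableAt (hΩ.mem_nhds hx)
  have hp'diff : ∀ x ∈ Ω, DifferentiableAt ℝ (fderiv ℝ p) x := fun x hx =>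
    (hp'.differentiableOn one_ne_zero).differentiableAt (hΩ.mem_nhds hx)
  have hpdp : ∀ (i : Fin 2), ∀ x ∈ Ω, HasFDerivAt (pdR p i)
      ((ContinuousLinearMap.apply ℝ ℝ (Pi.single i 1 : RV 1)).comp
        (fderiv ℝ (fderiv ℝ p) x)) x := fun i x hx =>
    ((ContinuousLinearMap.apply ℝ ℝ (Pi.single i 1 : RV 1)).hasFDerivAt).comp x
      ((hp'diff x hx).hasFDerivAt)
  have hpdR2 : ∀ x ∈ Ω, ∀ i j : Fin 2, pdR2 p i j x
      = fderiv ℝ (fderiv ℝ p) x (Pi.single i 1) (Pi.single j 1) := by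
    intro x hx i j
    show fderiv ℝ (pdR p j) x (Pi.single i 1) = _
    rw [(hpdp j x hx).fderiv]
    rfl
  have hpic : ∀ i : Fin 2, ContinuousOn (pdR p i) Ω := fun i =>
    (ContinuousLinearMap.apply ℝ ℝ (Pi.single i 1 : RV 1)).continuous.comp_continuousOn
      hp'.continuousOn
  have hp''0 : ContDiffOn ℝ 0 (fderiv ℝ (fderiv ℝ p)) Ω := hp'.fderiv_of_isOpen hΩ (by norm_num)
  have hp'' : ContinuousOn (fderiv ℝ (fderiv ℝ p)) Ω := hp''0.continuousOn
  have hp2C : ∀ (i j : Fin 2), ∀ x ∈ Ω, ContinuousAt (pdR2 p i j) x := by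
    intro i j x hx
    have hc2 : ContinuousAt
        (fun y => fderiv ℝ (fderiv ℝ p) y (Pi.single i 1) (Pi.single j 1)) x := by
      have h1 : ContinuousOn
          (fun y => fderiv ℝ (fderiv ℝ p) y (Pi.single i 1) (Pi.single j 1)) Ω :=
        (hp''.clm_apply continuousOn_const).clm_apply continuousOn_const
      exact h1.continuousAt (hΩ.mem_nhds hx)
    apply hc2.congr
    filter_upwards [hΩ.mem_nhds hx] with y hy using (hpdR2 y hy i j).symm
  -- the three integrands
  set f1 : RV 1 → ℝ := fun x => (2*((u x * pdR p 0 x + v x * pdR p 1 x - pdR u 0 x - pdR v 1 x)^2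
        + (v x * pdR p 0 x - u x * pdR p 1 x - pdR v 0 x + pdR u 1 x)^2)) * Real.exp (-p x)
    with hf1def
  set f2 : RV 1 → ℝ := fun x =>
      (2*((pdR u 0 x - pdR v 1 x)^2 + (pdR v 0 x + pdR u 1 x)^2)) * Real.exp (-p x) with hf2def
  set f3 : RV 1 → ℝ := fun x =>
      (2*(u x^2 + v x^2)) * ((pdR2 p 0 0 x + pdR2 p 1 1 x)) * Real.exp (-p x) with hf3def
  set F : RV 1 → ℝ := fun x => f1 x - f2 x - f3 x with hFdef
  set G0 : RV 1 → ℝ := fun x =>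
      2*(2*(u x * pdR v 1 x) - 2*(v x * pdR u 1 x) - (u x * u x + v x * v x) * pdR p 0 x)
    with hG0def
  set G1 : RV 1 → ℝ := fun x =>
      2*(2*(v x * pdR u 0 x) - 2*(u x * pdR v 0 x) - (u x * u x + v x * v x) * pdR p 1 x)
    with hG1def
  set W0 : RV 1 → ℝ := fun x => Real.exp (-p x) * G0 x with hW0def
  set W1 : RV 1 → ℝ := fun x => Real.exp (-p x) * G1 x with hW1def
  have h0f1 : ∀ x ∉ K, f1 x = 0 := by
    intro x hx; rw [hf1def]; simp only [h0u x hx, h0v x hx, h0du x hx, h0dv x hx]; ring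
  have h0f2 : ∀ x ∉ K, f2 x = 0 := by
    intro x hx; rw [hf2def]; simp only [h0du x hx, h0dv x hx]; ring
  have h0f3 : ∀ x ∉ K, f3 x = 0 := by
    intro x hx; rw [hf3def]; simp only [h0u x hx, h0v x hx]; ring
  have h0F : ∀ x ∉ K, F x = 0 := by
    intro x hx; rw [hFdef]; simp only [h0f1 x hx, h0f2 x hx, h0f3 x hx]; ring
  have h0G0 : ∀ x ∉ K, G0 x = 0 := by
    intro x hx; rw [hG0def]; simp only [h0u x hx, h0v x hx, h0du x hx, h0dv x hx]; ring
  have h0G1 : ∀ x ∉ K, G1 x = 0 := by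
    intro x hx; rw [hG1def]; simp only [h0u x hx, h0v x hx, h0du x hx, h0dv x hx]; ring
  have h0W0 : ∀ x ∉ K, W0 x = 0 := by
    intro x hx; rw [hW0def]; simp only [h0G0 x hx]; ring
  have h0W1 : ∀ x ∉ K, W1 x = 0 := by
    intro x hx; rw [hW1def]; simp only [h0G1 x hx]; ring
  -- pointwise divergence identity
  have hWd : ∀ x : RV 1, DifferentiableAt ℝ W0 x ∧ DifferentiableAt ℝ W1 x ∧
      fderiv ℝ W0 x (Pi.single 0 1) + fderiv ℝ W1 x (Pi.single 1 1) = F x := by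
    intro x
    by_cases hx : x ∈ Ω
    · have hexp : HasFDerivAt (fun y => Real.exp (-p y))
          (Real.exp (-p x) • -(fderiv ℝ p x)) x := ((hpdiff x hx).hasFDerivAt.neg).exp
      have hG0x : HasFDerivAt G0 ((2:ℝ) •
          ((2:ℝ) • (u x • ((ContinuousLinearMap.apply ℝ ℝ (Pi.single 1 1 : RV 1)).comp (fderiv ℝ (fderiv ℝ v) x)) +
              pdR v 1 x • fderiv ℝ u x) -
            (2:ℝ) • (v x • ((ContinuousLinearMap.apply ℝ ℝ (Pi.single 1 1 : RV 1)).comp (fderiv ℝ (fderiv ℝ u) x)) +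
              pdR u 1 x • fderiv ℝ v x) -
          ((u x * u x + v x * v x) • ((ContinuousLinearMap.apply ℝ ℝ (Pi.single 0 1 : RV 1)).comp (fderiv ℝ (fderiv ℝ p) x)) +
            pdR p 0 x • (u x • fderiv ℝ u x + u x • fderiv ℝ u x +
              (v x • fderiv ℝ v x + v x • fderiv ℝ v x))))) x := by
        rw [hG0def]
        have hA := ((hud x).hasFDerivAt.mul (hpdv 1 x)).const_mul (2:ℝ)
        have hB := ((hvd x).hasFDerivAt.mul (hpdu 1 x)).const_mul (2:ℝ)
        have hC := (((hud x).hasFDerivAt.mul (hud x).hasFDerivAt).add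
          ((hvd x).hasFDerivAt.mul (hvd x).hasFDerivAt)).mul (hpdp 0 x hx)
        exact ((hA.sub hB).sub hC).const_mul (2:ℝ)
      have hG1x : HasFDerivAt G1 ((2:ℝ) •
          ((2:ℝ) • (v x • ((ContinuousLinearMap.apply ℝ ℝ (Pi.single 0 1 : RV 1)).comp (fderiv ℝ (fderiv ℝ u) x)) +
              pdR u 0 x • fderiv ℝ v x) -
            (2:ℝ) • (u x • ((ContinuousLinearMap.apply ℝ ℝ (Pi.single 0 1 : RV 1)).comp (fderiv ℝ (fderiv ℝ v) x)) +
              pdR v 0 x • fderiv ℝ u x) -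
          ((u x * u x + v x * v x) • ((ContinuousLinearMap.apply ℝ ℝ (Pi.single 1 1 : RV 1)).comp (fderiv ℝ (fderiv ℝ p) x)) +
            pdR p 1 x • (u x • fderiv ℝ u x + u x • fderiv ℝ u x +
              (v x • fderiv ℝ v x + v x • fderiv ℝ v x))))) x := by
        rw [hG1def]
        have hA := ((hvd x).hasFDerivAt.mul (hpdu 0 x)).const_mul (2:ℝ)
        have hB := ((hud x).hasFDerivAt.mul (hpdv 0 x)).const_mul (2:ℝ)
        have hC := (((hud x).hasFDerivAt.mul (hud x).hasFDerivAt).add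
          ((hvd x).hasFDerivAt.mul (hvd x).hasFDerivAt)).mul (hpdp 1 x hx)
        exact ((hA.sub hB).sub hC).const_mul (2:ℝ)
      have hW0x : HasFDerivAt W0 (Real.exp (-p x) • ((2:ℝ) •
          ((2:ℝ) • (u x • ((ContinuousLinearMap.apply ℝ ℝ (Pi.single 1 1 : RV 1)).comp (fderiv ℝ (fderiv ℝ v) x)) +
              pdR v 1 x • fderiv ℝ u x) -
            (2:ℝ) • (v x • ((ContinuousLinearMap.apply ℝ ℝ (Pi.single 1 1 : RV 1)).comp (fderiv ℝ (fderiv ℝ u) x)) +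
              pdR u 1 x • fderiv ℝ v x) -
          ((u x * u x + v x * v x) • ((ContinuousLinearMap.apply ℝ ℝ (Pi.single 0 1 : RV 1)).comp (fderiv ℝ (fderiv ℝ p) x)) +
            pdR p 0 x • (u x • fderiv ℝ u x + u x • fderiv ℝ u x +
              (v x • fderiv ℝ v x + v x • fderiv ℝ v x)))))
          + G0 x • (Real.exp (-p x) • -(fderiv ℝ p x))) x := by
        rw [hW0def]
        exact hexp.mul hG0x
      have hW1x : HasFDerivAt W1 (Real.exp (-p x) • ((2:ℝ) •
          ((2:ℝ) • (v x • ((ContinuousLinearMap.apply ℝ ℝ (Pi.single 0 1 : RV 1)).comp (fderiv ℝ (fderiv ℝ u) x)) +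
              pdR u 0 x • fderiv ℝ v x) -
            (2:ℝ) • (u x • ((ContinuousLinearMap.apply ℝ ℝ (Pi.single 0 1 : RV 1)).comp (fderiv ℝ (fderiv ℝ v) x)) +
              pdR v 0 x • fderiv ℝ u x) -
          ((u x * u x + v x * v x) • ((ContinuousLinearMap.apply ℝ ℝ (Pi.single 1 1 : RV 1)).comp (fderiv ℝ (fderiv ℝ p) x)) +
            pdR p 1 x • (u x • fderiv ℝ u x + u x • fderiv ℝ u x +
              (v x • fderiv ℝ v x + v x • fderiv ℝ v x)))))
          + G1 x • (Real.exp (-p x) • -(fderiv ℝ p x))) x := by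
        rw [hW1def]
        exact hexp.mul hG1x
      refine ⟨hW0x.differentiableAt, hW1x.differentiableAt, ?_⟩
      rw [hW0x.fderiv, hW1x.fderiv]
      rw [hFdef]
      simp only [hf1def, hf2def, hf3def, hG0def, hG1def]
      rw [hpdR2 x hx 0 0, hpdR2 x hx 1 1]
      simp only [ContinuousLinearMap.add_apply, ContinuousLinearMap.smul_apply,
        ContinuousLinearMap.coe_smul', ContinuousLinearMap.coe_sub', Pi.smul_apply, Pi.sub_apply,
        ContinuousLinearMap.coe_comp', Function.comp_apply, ContinuousLinearMap.apply_apply,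
        ContinuousLinearMap.neg_apply, smul_eq_mul, Pi.add_apply]
      simp only [pdR]
      rw [hsymm_u x, hsymm_v x]
      ring
    · have hxK : x ∉ K := fun h => hx (hKΩ h)
      have hev0 : W0 =ᶠ[nhds x] (fun _ => 0) := by
        filter_upwards [hKc.isOpen_compl.mem_nhds hxK] with y hy using h0W0 y hy
      have hev1 : W1 =ᶠ[nhds x] (fun _ => 0) := by
        filter_upwards [hKc.isOpen_compl.mem_nhds hxK] with y hy using h0W1 y hy
      have hW0x : HasFDerivAt W0 (0 : RV 1 →L[ℝ] ℝ) x :=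
        (hasFDerivAt_const (0:ℝ) x).congr_of_eventuallyEq hev0
      have hW1x : HasFDerivAt W1 (0 : RV 1 →L[ℝ] ℝ) x :=
        (hasFDerivAt_const (0:ℝ) x).congr_of_eventuallyEq hev1
      refine ⟨hW0x.differentiableAt, hW1x.differentiableAt, ?_⟩
      rw [hW0x.fderiv, hW1x.fderiv, h0F x hxK]
      simp
  -- continuity
  have hexpC : ∀ x ∈ Ω, ContinuousAt (fun y => Real.exp (-p y)) x := fun x hx =>
    Real.continuous_exp.continuousAt.comp ((hpdiff x hx).continuousAt.neg)
  have hf1c : Continuous f1 := by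
    apply continuous_of_glue hΩ hKc hKΩ _ h0f1
    intro x hx
    rw [hf1def]
    have hp0 : ContinuousAt (pdR p 0) x := (hpic 0).continuousAt (hΩ.mem_nhds hx)
    have hp1 : ContinuousAt (pdR p 1) x := (hpic 1).continuousAt (hΩ.mem_nhds hx)
    have hc1 : ContinuousAt
        (fun y => u y * pdR p 0 y + v y * pdR p 1 y - pdR u 0 y - pdR v 1 y) x :=
      (((hu.continuous.continuousAt.mul hp0).add
        (hv.continuous.continuousAt.mul hp1)).sub
        (hpduc 0).continuousAt).sub (hpdvc 1).continuousAt
    have hc2 : ContinuousAt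
        (fun y => v y * pdR p 0 y - u y * pdR p 1 y - pdR v 0 y + pdR u 1 y) x :=
      (((hv.continuous.continuousAt.mul hp0).sub
        (hu.continuous.continuousAt.mul hp1)).sub
        (hpdvc 0).continuousAt).add (hpduc 1).continuousAt
    exact (continuousAt_const.mul ((hc1.pow 2).add (hc2.pow 2))).mul (hexpC x hx)
  have hf2c : Continuous f2 := by
    apply continuous_of_glue hΩ hKc hKΩ _ h0f2
    intro x hx
    rw [hf2def]
    have hc1 : ContinuousAt (fun y => pdR u 0 y - pdR v 1 y) x :=
      (hpduc 0).continuousAt.sub (hpdvc 1).continuousAt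
    have hc2 : ContinuousAt (fun y => pdR v 0 y + pdR u 1 y) x :=
      (hpdvc 0).continuousAt.add (hpduc 1).continuousAt
    exact (continuousAt_const.mul ((hc1.pow 2).add (hc2.pow 2))).mul (hexpC x hx)
  have hf3c : Continuous f3 := by
    apply continuous_of_glue hΩ hKc hKΩ _ h0f3
    intro x hx
    rw [hf3def]
    have hc1 : ContinuousAt (fun y => u y ^ 2 + v y ^ 2) x :=
      (hu.continuous.continuousAt.pow 2).add (hv.continuous.continuousAt.pow 2)
    exact ((continuousAt_const.mul hc1).mul
      ((hp2C 0 0 x hx).add (hp2C 1 1 x hx))).mul (hexpC x hx)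
  have hFc : Continuous F := by
    rw [hFdef]
    exact (hf1c.sub hf2c).sub hf3c
  -- compact support and integrability
  have hcsf1 : HasCompactSupport f1 := hcs_of_vanish hK h0f1
  have hcsf2 : HasCompactSupport f2 := hcs_of_vanish hK h0f2
  have hcsf3 : HasCompactSupport f3 := hcs_of_vanish hK h0f3
  have hcsF : HasCompactSupport F := hcs_of_vanish hK h0F
  have hif1 : Integrable f1 := hf1c.integrable_of_hasCompactSupport hcsf1
  have hif2 : Integrable f2 := hf2c.integrable_of_hasCompactSupport hcsf2
  have hif3 : Integrable f3 := hf3c.integrable_of_hasCompactSupport hcsf3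
  -- choose a box
  obtain ⟨r0, hr0⟩ := hK.isBounded.subset_ball (0 : RV 1)
  set R : ℝ := max r0 1 with hRdef
  have hR1 : (0:ℝ) < R := lt_of_lt_of_le one_pos (le_max_right _ _)
  have hKR : K ⊆ Metric.ball 0 R := hr0.trans (Metric.ball_subset_ball (le_max_left _ _))
  set a : RV 1 := fun _ => -R with hadef
  set b : RV 1 := fun _ => R with hbdef
  have hle : a ≤ b := fun i => by rw [hadef, hbdef]; simp; linarith
  have hnorm : ∀ x ∈ K, ∀ i : Fin 2, |x i| < R := by
    intro x hxK i
    have h1 : ‖x i‖ ≤ ‖x‖ := norm_le_pi_norm x i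
    have h2 : ‖x‖ < R := by
      have := hKR hxK
      rwa [Metric.mem_ball, dist_zero_right] at this
    rw [Real.norm_eq_abs] at h1
    linarith
  have hKIoo : K ⊆ Set.pi Set.univ (fun _ : Fin 2 => Set.Ioo (-R) R) := by
    intro x hxK
    intro i _
    have := hnorm x hxK i
    rw [abs_lt] at this
    exact ⟨this.1, this.2⟩
  have hKIcc : K ⊆ Set.Icc a b := by
    intro x hxK
    rw [Set.mem_Icc]
    constructor
    · intro i
      have := hnorm x hxK i
      rw [abs_lt] at this
      rw [hadef]
      exact le_of_lt this.1
    · intro i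
      have := hnorm x hxK i
      rw [abs_lt] at this
      rw [hbdef]
      exact le_of_lt this.2
  -- vanishing on points with a coordinate of absolute value R
  have hWface : ∀ (i : Fin 2) (c : ℝ), |c| = R → ∀ y : Fin 1 → ℝ,
      (![W0, W1] i) (i.insertNth c y) = 0 := by
    intro i c hc y
    have hzK : (i.insertNth c y) ∉ K := by
      intro hmem
      have := hnorm _ hmem i
      rw [Fin.insertNth_apply_same, hc] at this
      exact lt_irrefl _ this
    fin_cases i
    · exact h0W0 _ hzK
    · exact h0W1 _ hzK
  -- the divergence sum is F
  have hsumF : (fun x => ∑ i : Fin 2, fderiv ℝ (![W0, W1] i) x (Pi.single i 1)) = F := by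
    funext x
    rw [Fin.sum_univ_two]
    simp only [Matrix.cons_val_zero, Matrix.cons_val_one, Matrix.head_cons]
    exact (hWd x).2.2
  -- divergence theorem
  have hdivthm := MeasureTheory.integral_divergence_of_hasFDerivAt_off_countable'
    (a := a) (b := b) hle (![W0, W1]) (fun i x => fderiv ℝ (![W0, W1] i) x) ∅ Set.countable_empty
    (by
      intro i
      fin_cases i
      · exact (continuous_of_glue hΩ hKc hKΩ (fun x hx => by
          rw [hW0def]
          exact ((hexpC x hx).mul (by
            rw [hG0def]
            exact continuousAt_const.mul
              ((((hu.continuous.continuousAt.mul (hpdvc 1).continuousAt).const_mul (2:ℝ)).sub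
                ((hv.continuous.continuousAt.mul (hpduc 1).continuousAt).const_mul (2:ℝ))).sub
                (((hu.continuous.continuousAt.mul hu.continuous.continuousAt).add
                  (hv.continuous.continuousAt.mul hv.continuous.continuousAt)).mul
                  ((hpic 0).continuousAt (hΩ.mem_nhds hx))))))) h0W0).continuousOn
      · exact (continuous_of_glue hΩ hKc hKΩ (fun x hx => by
          rw [hW1def]
          exact ((hexpC x hx).mul (by
            rw [hG1def]
            exact continuousAt_const.mul
              ((((hv.continuous.continuousAt.mul (hpduc 0).continuousAt).const_mul (2:ℝ)).sub
                ((hu.continuous.continuousAt.mul (hpdvc 0).continuousAt).const_mul (2:ℝ))).sub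
                (((hu.continuous.continuousAt.mul hu.continuous.continuousAt).add
                  (hv.continuous.continuousAt.mul hv.continuous.continuousAt)).mul
                  ((hpic 1).continuousAt (hΩ.mem_nhds hx))))))) h0W1).continuousOn)
    (by
      intro x _ i
      fin_cases i
      · exact ((hWd x).1).hasFDerivAt
      · exact ((hWd x).2.1).hasFDerivAt)
    (by
      rw [hsumF]
      exact (hFc.integrable_of_hasCompactSupport hcsF).integrableOn)
  rw [hsumF] at hdivthm
  -- faces vanish
  have hfaces : ∑ i : Fin 2,
      ((∫ x in Set.Icc (a ∘ i.succAbove) (b ∘ i.succAbove), (![W0, W1] i) (i.insertNth (b i) x)) -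
        ∫ x in Set.Icc (a ∘ i.succAbove) (b ∘ i.succAbove), (![W0, W1] i) (i.insertNth (a i) x))
      = 0 := by
    apply Finset.sum_eq_zero
    intro i _
    have h1 : ∀ y : Fin 1 → ℝ, (![W0, W1] i) (i.insertNth (b i) y) = 0 := by
      intro y
      apply hWface i (b i) _ y
      show |R| = R
      exact abs_of_pos hR1
    have h2 : ∀ y : Fin 1 → ℝ, (![W0, W1] i) (i.insertNth (a i) y) = 0 := by
      intro y
      apply hWface i (a i) _ y
      show |-R| = R
      rw [abs_neg]
      exact abs_of_pos hR1
    rw [show (fun y : Fin 1 → ℝ => (![W0, W1] i) (i.insertNth (b i) y)) = fun _ => (0:ℝ) from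
      funext h1]
    rw [show (fun y : Fin 1 → ℝ => (![W0, W1] i) (i.insertNth (a i) y)) = fun _ => (0:ℝ) from
      funext h2]
    rw [integral_zero, sub_self]
  rw [hfaces] at hdivthm
  have hIccF : ∫ x, F x = ∫ x in Set.Icc a b, F x :=
    (setIntegral_eq_integral_of_forall_compl_eq_zero
      (fun x hx => h0F x (fun hK' => hx (hKIcc hK')))).symm
  have hdiv0 : ∫ x, F x = 0 := by rw [hIccF, hdivthm]
  rw [setIntegral_eq_integral_of_forall_compl_eq_zero
      (fun x hx => h0f1 x (fun hK' => hx (hKΩ hK'))),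
    setIntegral_eq_integral_of_forall_compl_eq_zero
      (fun x hx => h0f2 x (fun hK' => hx (hKΩ hK'))),
    setIntegral_eq_integral_of_forall_compl_eq_zero
      (fun x hx => h0f3 x (fun hK' => hx (hKΩ hK')))]
  have hsplit : ∫ x, F x = (∫ x, f1 x) - (∫ x, f2 x) - (∫ x, f3 x) := by
    have h12 : Integrable (fun x => f1 x - f2 x) volume := hif1.sub hif2
    have e1 : ∫ x, (f1 x - f2 x - f3 x) = (∫ x, (f1 x - f2 x)) - ∫ x, f3 x :=
      integral_sub h12 hif3
    have e2 : ∫ x, (f1 x - f2 x) = (∫ x, f1 x) - ∫ x, f2 x := integral_sub hif1 hif2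
    rw [hFdef, e1, e2]
  linarith [hsplit, hdiv0]


theorem dualOp_identity_dim_two (Ω : Set (RV 1)) (hΩ : IsOpen Ω)
    (φ : RV 1 → ℝ) (hφ : ContDiffOn ℝ 2 φ Ω) :
    ∀ α : RV 1 → CA 1, IsTest Ω α →
      ∫ x in Ω, CA.normSq (dualOp φ α x) * Real.exp (-φ x) =
        (∫ x in Ω, CA.normSq (DiracL α x) * Real.exp (-φ x)) +
          ∫ x in Ω, CA.normSq (α x) * lap φ x * Real.exp (-φ x) := by
  rintro α ⟨hα, hcα, hsα⟩
  have hu : ContDiff ℝ (⊤ : ℕ∞) (fun x => α x ∅) := contDiff_pi.mp hα ∅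
  have hv : ContDiff ℝ (⊤ : ℕ∞) (fun x => α x {0}) := contDiff_pi.mp hα {0}
  have hcu : HasCompactSupport (fun x => α x ∅) :=
    hcα.comp_left (g := fun g : CA 1 => g ∅) rfl
  have hcv : HasCompactSupport (fun x => α x {0}) :=
    hcα.comp_left (g := fun g : CA 1 => g {0}) rfl
  have hsu : tsupport (fun x => α x ∅) ⊆ Ω := by
    refine subset_trans (closure_mono ?_) hsα
    intro x hx hax
    exact hx (by simp [Function.mem_support.mp, hax])
  have hsv : tsupport (fun x => α x {0}) ⊆ Ω := by
    refine subset_trans (closure_mono ?_) hsα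
    intro x hx hax
    exact hx (by simp [hax])
  have hkey := key Ω hΩ φ (fun x => α x ∅) (fun x => α x {0}) hφ hu hv hcu hcv hsu hsv
  have e1 : (fun x => CA.normSq (dualOp φ α x) * Real.exp (-φ x))
      = fun x => (2*(((fun x => α x ∅) x * pdR φ 0 x + (fun x => α x {0}) x * pdR φ 1 x
          - pdR (fun x => α x ∅) 0 x - pdR (fun x => α x {0}) 1 x)^2
        + ((fun x => α x {0}) x * pdR φ 0 x - (fun x => α x ∅) x * pdR φ 1 x
          - pdR (fun x => α x {0}) 0 x + pdR (fun x => α x ∅) 1 x)^2)) * Real.exp (-φ x) := by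
    funext x
    rw [normSq1, dualOp_empty, dualOp_single]
    rfl
  have e2 : (fun x => CA.normSq (DiracL α x) * Real.exp (-φ x))
      = fun x => (2*((pdR (fun x => α x ∅) 0 x - pdR (fun x => α x {0}) 1 x)^2
        + (pdR (fun x => α x {0}) 0 x + pdR (fun x => α x ∅) 1 x)^2)) * Real.exp (-φ x) := by
    funext x
    rw [normSq1, DiracL_empty, DiracL_single]
    rfl
  have e3 : (fun x => CA.normSq (α x) * lap φ x * Real.exp (-φ x))
      = fun x => (2*((fun x => α x ∅) x^2 + (fun x => α x {0}) x^2))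
          * ((pdR2 φ 0 0 x + pdR2 φ 1 1 x)) * Real.exp (-φ x) := by
    funext x
    rw [normSq1, lap_eq]
  rw [e1, e2, e3]
  exact hkey

end
end
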